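/- Let p ≥ 3 and x, x' ∈ ℝᵖ. If Σ_{j ≠ i} exp(xᵢ + xⱼ) = Σ_{j ≠ i} exp(x'ᵢ + x'ⱼ) for all i ∈ {1,…,p} and the function ℓ(·; v) with vᵢ = Σ_{j ≠ i} exp(xᵢ + xⱼ) attains its minimum at both x and x', then x = x'. -/
import Mathlib

lemma exp_mid_le' (a b : ℝ) : Real.exp ((a + b)/2) ≤ (Real.exp a + Real.exp b)/2 := by
  rcases eq_or_ne a b with h | h
  · subst h; rw [add_self_div_two, add_self_div_two]
  · have := strictConvexOn_exp.2 (Set.mem_univ a) (Set.mem_univ b) h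
      (by norm_num : (0:ℝ) < 1/2) (by norm_num : (0:ℝ) < 1/2) (by norm_num)
    simp only [smul_eq_mul] at this
    have harg : (a + b)/2 = 1/2*a + 1/2*b := by ring
    rw [harg]; linarith

lemma exp_mid_lt' {a b : ℝ} (h : a ≠ b) :
    Real.exp ((a + b)/2) < (Real.exp a + Real.exp b)/2 := by
  have := strictConvexOn_exp.2 (Set.mem_univ a) (Set.mem_univ b) h
    (by norm_num : (0:ℝ) < 1/2) (by norm_num : (0:ℝ) < 1/2) (by norm_num)
  simp only [smul_eq_mul] at this
  have harg : (a + b)/2 = 1/2*a + 1/2*b := by ring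
  rw [harg]; linarith

/-- Uniqueness of the minimizer: if x and x' have the same exponential row sums and both
minimize ℓ(·; v) with vᵢ = Σ_{j≠i} exp(xᵢ+xⱼ), then x = x'. -/
theorem mom_minimizer_unique (p : ℕ) (hp : 3 ≤ p) (x x' : Fin p → ℝ)
    (hrow : ∀ i : Fin p,
      ∑ j ∈ Finset.univ.erase i, Real.exp (x i + x j)
        = ∑ j ∈ Finset.univ.erase i, Real.exp (x' i + x' j))
    (hmin : IsMinOn (fun y : Fin p → ℝ =>
      (∑ i : Fin p, ∑ j ∈ Finset.Ioi i, Real.exp (y i + y j))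
        - ∑ i : Fin p, y i * (∑ j ∈ Finset.univ.erase i, Real.exp (x i + x j)))
      Set.univ x)
    (hmin' : IsMinOn (fun y : Fin p → ℝ =>
      (∑ i : Fin p, ∑ j ∈ Finset.Ioi i, Real.exp (y i + y j))
        - ∑ i : Fin p, y i * (∑ j ∈ Finset.univ.erase i, Real.exp (x i + x j)))
      Set.univ x') :
    x = x' := by
  classical
  set v : Fin p → ℝ := fun i => ∑ j ∈ Finset.univ.erase i, Real.exp (x i + x j) with hv
  have hxm : ∀ y : Fin p → ℝ,
      (∑ i : Fin p, ∑ j ∈ Finset.Ioi i, Real.exp (x i + x j)) - ∑ i : Fin p, x i * v i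
      ≤ (∑ i : Fin p, ∑ j ∈ Finset.Ioi i, Real.exp (y i + y j)) - ∑ i : Fin p, y i * v i :=
    fun y => hmin (Set.mem_univ y)
  have hx'm : ∀ y : Fin p → ℝ,
      (∑ i : Fin p, ∑ j ∈ Finset.Ioi i, Real.exp (x' i + x' j)) - ∑ i : Fin p, x' i * v i
      ≤ (∑ i : Fin p, ∑ j ∈ Finset.Ioi i, Real.exp (y i + y j)) - ∑ i : Fin p, y i * v i :=
    fun y => hmin' (Set.mem_univ y)
  have feq :
      (∑ i : Fin p, ∑ j ∈ Finset.Ioi i, Real.exp (x i + x j)) - ∑ i : Fin p, x i * v i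
      = (∑ i : Fin p, ∑ j ∈ Finset.Ioi i, Real.exp (x' i + x' j)) - ∑ i : Fin p, x' i * v i :=
    le_antisymm (hxm x') (hx'm x)
  by_cases hP : ∀ i : Fin p, ∀ j ∈ Finset.Ioi i, x i + x j = x' i + x' j
  · -- pairwise equalities imply equality of coordinates (p ≥ 3)
    have hsym : ∀ i j : Fin p, i ≠ j → x i + x j = x' i + x' j := by
      intro i j hij
      rcases lt_or_gt_of_ne hij with h | h
      · exact hP i j (Finset.mem_Ioi.mpr h)
      · have := hP j i (Finset.mem_Ioi.mpr h); linarith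
    funext i
    have hcard : 1 < (Finset.univ.erase i).card := by
      rw [Finset.card_erase_of_mem (Finset.mem_univ i), Finset.card_univ, Fintype.card_fin]
      omega
    obtain ⟨j, hj, k, hk, hjk⟩ := Finset.one_lt_card.mp hcard
    have hij : i ≠ j := (Finset.ne_of_mem_erase hj).symm
    have hik : i ≠ k := (Finset.ne_of_mem_erase hk).symm
    have e1 := hsym i j hij
    have e2 := hsym i k hik
    have e3 := hsym j k hjk
    linarith
  · exfalso
    push_neg at hP
    obtain ⟨i₀, j₀, hj₀, hne⟩ := hP
    set m : Fin p → ℝ := fun i => (x i + x' i)/2 with hm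
    have hmid : ∀ i j : Fin p, m i + m j = ((x i + x j) + (x' i + x' j))/2 := by
      intro i j; simp only [hm]; ring
    -- exponential part strict inequality
    have key : ∀ i : Fin p, ∑ j ∈ Finset.Ioi i, Real.exp (m i + m j)
        ≤ ∑ j ∈ Finset.Ioi i, (Real.exp (x i + x j) + Real.exp (x' i + x' j))/2 := by
      intro i
      refine Finset.sum_le_sum fun j _ => ?_
      rw [hmid]; exact exp_mid_le' _ _
    have keystrict : ∑ j ∈ Finset.Ioi i₀, Real.exp (m i₀ + m j)
        < ∑ j ∈ Finset.Ioi i₀, (Real.exp (x i₀ + x j) + Real.exp (x' i₀ + x' j))/2 := by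
      refine Finset.sum_lt_sum (fun j _ => by rw [hmid]; exact exp_mid_le' _ _) ⟨j₀, hj₀, ?_⟩
      rw [hmid]; exact exp_mid_lt' hne
    have hE : (∑ i : Fin p, ∑ j ∈ Finset.Ioi i, Real.exp (m i + m j))
        < ∑ i : Fin p, ∑ j ∈ Finset.Ioi i,
            (Real.exp (x i + x j) + Real.exp (x' i + x' j))/2 :=
      Finset.sum_lt_sum (fun i _ => key i) ⟨i₀, Finset.mem_univ i₀, keystrict⟩
    have hE2 : (∑ i : Fin p, ∑ j ∈ Finset.Ioi i,
            (Real.exp (x i + x j) + Real.exp (x' i + x' j))/2)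
        = ((∑ i : Fin p, ∑ j ∈ Finset.Ioi i, Real.exp (x i + x j))
          + ∑ i : Fin p, ∑ j ∈ Finset.Ioi i, Real.exp (x' i + x' j))/2 := by
      rw [← Finset.sum_add_distrib, Finset.sum_div]
      refine Finset.sum_congr rfl fun i _ => ?_
      rw [← Finset.sum_add_distrib, Finset.sum_div]
    have hL : (∑ i : Fin p, m i * v i)
        = ((∑ i : Fin p, x i * v i) + ∑ i : Fin p, x' i * v i)/2 := by
      rw [← Finset.sum_add_distrib, Finset.sum_div]
      refine Finset.sum_congr rfl fun i _ => ?_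
      simp only [hm]; ring
    have hmin_m := hxm m
    rw [hE2] at hE
    linarith
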